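/- (Semantic correctness of the axiom for ⪯, equation (2).) For all a b : α: a ∈ F {c : α | stage(c) < stage(b)} if and only if stage(a) ≤ stage(b) and stage(a) ≤ f. That is, a is derivable from the atoms derived strictly before b exactly when a is derived before b (and is derived at all). -/

import Mathlib

/- The stage of an atom `a` under the staged fixed-point computation
(Algorithm 2): the least `l` with `a ∈ F^[l] ∅` if `a` belongs to the
fixed point `F^[f] ∅`, and `f + 1` otherwise. -/
open Classical in
noncomputable def stage {α : Type*} (F : Set α → Set α) (f : ℕ) (a : α) : ℕ :=
  if a ∈ F^[f] (∅ : Set α) then sInf {l : ℕ | a ∈ F^[l] (∅ : Set α)} else f + 1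

/-!
The stages `F^[n] ∅` increase and are constant from `f` on, so `c ∈ F^[m] ∅` holds exactly when
`c` is reached at all and no later than step `m`, i.e. `stage c ≤ m` and `stage c ≤ f`. Since
`1 ≤ stage b ≤ f + 1`, the atoms of stage `< stage b` form the stage `F^[stage b - 1] ∅`, whose
image under `F` is `F^[stage b] ∅`; the claim is then the membership criterion for `m = stage b`.
-/

section

variable {α : Type*} {F : Set α → Set α} {f : ℕ}

theorem stage_of_mem {c : α} (hc : c ∈ F^[f] ∅) :
    stage F f c = sInf {l : ℕ | c ∈ F^[l] (∅ : Set α)} := by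
  rw [stage, if_pos hc]

theorem stage_of_notMem {c : α} (hc : c ∉ F^[f] ∅) : stage F f c = f + 1 := by
  rw [stage, if_neg hc]

theorem stage_le_succ (c : α) : stage F f c ≤ f + 1 := by
  by_cases hc : c ∈ F^[f] ∅
  · exact (stage_of_mem hc ▸ Nat.sInf_le hc).trans f.le_succ
  · exact (stage_of_notMem hc).le

theorem mem_iterate_stage {c : α} (hc : c ∈ F^[f] ∅) : c ∈ F^[stage F f c] ∅ := by
  rw [stage_of_mem hc]
  exact Nat.sInf_mem (s := {l | c ∈ F^[l] ∅}) ⟨f, hc⟩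

theorem stage_pos (c : α) : 0 < stage F f c := by
  by_cases hc : c ∈ F^[f] ∅
  · refine Nat.pos_of_ne_zero fun h0 => ?_
    simpa [h0] using mem_iterate_stage hc
  · simp [stage_of_notMem hc]

theorem stage_le_iff_mem {c : α} : stage F f c ≤ f ↔ c ∈ F^[f] ∅ := by
  refine ⟨fun h => ?_, fun hc => stage_of_mem hc ▸ Nat.sInf_le hc⟩
  by_contra hc
  rw [stage_of_notMem hc] at h
  omega

theorem iterate_empty_eq_of_le (hf : F^[f + 1] ∅ = F^[f] ∅) {j : ℕ} (hj : f ≤ j) :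
    F^[j] ∅ = F^[f] ∅ := by
  have hfix : F (F^[f] ∅) = F^[f] ∅ := by rwa [← Function.iterate_succ_apply' F f]
  obtain ⟨k, rfl⟩ := Nat.exists_eq_add_of_le hj
  rw [Nat.add_comm, Function.iterate_add_apply, Function.iterate_fixed hfix]

theorem mem_iterate_empty_iff (hF : Monotone F) (hf : F^[f + 1] ∅ = F^[f] ∅) (m : ℕ) (c : α) :
    c ∈ F^[m] ∅ ↔ stage F f c ≤ m ∧ stage F f c ≤ f := by
  have hmono : Monotone fun n => F^[n] (∅ : Set α) :=
    hF.monotone_iterate_of_le_map (Set.empty_subset _)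
  rw [stage_le_iff_mem]
  constructor
  · intro hc
    have hcf : c ∈ F^[f] ∅ := by
      rcases le_total m f with h | h
      · exact hmono h hc
      · rwa [← iterate_empty_eq_of_le hf h]
    exact ⟨stage_of_mem hcf ▸ Nat.sInf_le hc, hcf⟩
  · rintro ⟨hm, hcf⟩
    exact hmono hm (mem_iterate_stage hcf)

theorem setOf_stage_le_eq_iterate (hF : Monotone F) (hf : F^[f + 1] ∅ = F^[f] ∅) {n : ℕ}
    (hn : n ≤ f) : {c : α | stage F f c ≤ n} = F^[n] ∅ := by
  ext c
  rw [Set.mem_ofPred_eq, mem_iterate_empty_iff hF hf]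
  constructor
  · exact fun h => ⟨h, h.trans hn⟩
  · exact And.left
end

theorem le_axiom_correct_general
    {α : Type*} (F : Set α → Set α) (hF : Monotone F)
    (f : ℕ) (hf : F^[f + 1] ∅ = F^[f] ∅) :
    ∀ a b : α,
      a ∈ F {c : α | stage F f c < stage F f b} ↔
        stage F f a ≤ stage F f b ∧ stage F f a ≤ f := by
  intro a b
  obtain ⟨n, hb⟩ : ∃ n, stage F f b = n + 1 := Nat.exists_eq_add_one.mpr (stage_pos b)
  have hn : n ≤ f := by have := stage_le_succ (F := F) (f := f) b; omega
  simp only [hb, Nat.lt_succ_iff]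
  rw [setOf_stage_le_eq_iterate hF hf hn, ← Function.iterate_succ_apply' F n]
  exact mem_iterate_empty_iff hF hf (n + 1) a

theorem le_axiom_correct
    {α : Type*} [Fintype α] (F : Set α → Set α) (hF : Monotone F)
    (f : ℕ) (hf : F^[f + 1] ∅ = F^[f] ∅)
    (hfmin : ∀ j : ℕ, F^[j + 1] ∅ = F^[j] ∅ → f ≤ j) :
    ∀ a b : α,
      a ∈ F {c : α | stage F f c < stage F f b} ↔
        stage F f a ≤ stage F f b ∧ stage F f a ≤ f :=
  le_axiom_correct_general F hF f hf
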